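/- Let μ = (μ₁,…,μ_m) and λ = (λ₁,…,λ_n) be probability vectors, ω₁ and ω₂ two weight functions with respect to μ and λ, and x₁,…,xₙ positive real numbers. Then ∏_{j=1}^n xⱼ^{λⱼ} ≤ ∏_{i=1}^m [I(∑_{j=1}^n ω₁(i,j)λⱼxⱼ, ∑_{j=1}^n ω₂(i,j)λⱼxⱼ)]^{μᵢ} ≤ ∑_{j=1}^n λⱼxⱼ, where I is the identric mean. -/

import Mathlib

/-!
For `a ≠ b`, `log I(a, b)` is the mean value of `log` over `[a, b]`, so the Hermite–Hadamard
inequalities for the concave function `log` give `√(ab) ≤ I(a, b) ≤ (a + b) / 2`; both follow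
by pairing `t` with its reflection `a + b - t`.

Put `S_k(i) = ∑ⱼ ω_k(i, j) λⱼ xⱼ`. Since `∑ᵢ ω(i, j) μᵢ = 1`, we have
`∑ᵢ μᵢ S_k(i) = ∑ⱼ λⱼ xⱼ` and, by Jensen's inequality for `log` in each row `i`,
`∑ⱼ λⱼ log xⱼ ≤ ∑ᵢ μᵢ log S_k(i)`. Averaging over `k = 1, 2` and using the geometric-mean
bound gives the left inequality; the arithmetic-mean bound followed by weighted AM–GM over `μ`
gives the right one.
-/

open Finset

/-- The identric mean: `I(a,b) = a` if `a = b`, and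
`I(a,b) = (1/e)(b^b/a^a)^{1/(b-a)}` otherwise. -/
noncomputable def identric (a b : ℝ) : ℝ :=
  if a = b then a else (Real.exp 1)⁻¹ * (b ^ b / a ^ a) ^ (b - a)⁻¹

open Real Set intervalIntegral MeasureTheory

section HermiteHadamard

variable {f : ℝ → ℝ} {a b t : ℝ}

lemma IntervalIntegrable.comp_add_sub (hf : IntervalIntegrable f volume a b) :
    IntervalIntegrable (fun t ↦ f (a + b - t)) volume a b := by
  simpa using (hf.comp_sub_left (a + b)).symm

lemma integral_add_comp_add_sub (hf : IntervalIntegrable f volume a b) :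
    ∫ t in a..b, (f t + f (a + b - t)) = 2 * ∫ t in a..b, f t := by
  rw [integral_add hf hf.comp_add_sub, integral_comp_sub_left, add_sub_cancel_right,
    add_sub_cancel_left, two_mul]

lemma add_sub_mem_Icc (ht : t ∈ Icc a b) : a + b - t ∈ Icc a b :=
  ⟨by linarith [ht.2], by linarith [ht.1]⟩

lemma ConcaveOn.add_le_add_comp_add_sub (hf : ConcaveOn ℝ (Icc a b) f) (hab : a < b)
    (ht : t ∈ Icc a b) : f a + f b ≤ f t + f (a + b - t) := by
  have hba : 0 < b - a := sub_pos.2 hab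
  obtain ⟨s, hs⟩ : ∃ s, s * (b - a) = t - a :=
    ⟨(t - a) / (b - a), div_mul_cancel₀ _ hba.ne'⟩
  have hs₀ : 0 ≤ s := nonneg_of_mul_nonneg_left (hs ▸ sub_nonneg.2 ht.1) hba
  have hs₁ : 0 ≤ 1 - s :=
    nonneg_of_mul_nonneg_left (by linarith [ht.2] : 0 ≤ (1 - s) * (b - a)) hba
  have ha : a ∈ Icc a b := left_mem_Icc.2 hab.le
  have hb : b ∈ Icc a b := right_mem_Icc.2 hab.le
  have hl := hf.2 ha hb hs₁ hs₀ (sub_add_cancel 1 s)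
  have hr := hf.2 ha hb hs₀ hs₁ (add_sub_cancel s 1)
  simp only [smul_eq_mul] at hl hr
  rw [show (1 - s) * a + s * b = t by linear_combination hs] at hl
  rw [show s * a + (1 - s) * b = a + b - t by linear_combination -hs] at hr
  linarith

lemma ConcaveOn.add_comp_add_sub_le_two_mul (hf : ConcaveOn ℝ (Icc a b) f)
    (ht : t ∈ Icc a b) : f t + f (a + b - t) ≤ 2 * f ((a + b) / 2) := by
  have h := hf.2 ht (add_sub_mem_Icc ht) (by norm_num : (0 : ℝ) ≤ 1 / 2)
    (by norm_num : (0 : ℝ) ≤ 1 / 2) (by norm_num)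
  simp only [smul_eq_mul] at h
  rw [show 1 / 2 * t + 1 / 2 * (a + b - t) = (a + b) / 2 by ring] at h
  linarith

theorem ConcaveOn.add_div_two_le_interval_average (hf : ConcaveOn ℝ (Icc a b) f)
    (hfi : IntervalIntegrable f volume a b) (hab : a < b) :
    (f a + f b) / 2 ≤ ⨍ t in a..b, f t := by
  have h := integral_mono_on hab.le intervalIntegrable_const (hfi.add hfi.comp_add_sub)
    fun t ht ↦ hf.add_le_add_comp_add_sub hab ht
  rw [intervalIntegral.integral_const, integral_add_comp_add_sub hfi, smul_eq_mul] at h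
  rw [interval_average_eq, smul_eq_mul, le_inv_mul_iff₀ (sub_pos.2 hab)]
  linarith

theorem ConcaveOn.interval_average_le_midpoint (hf : ConcaveOn ℝ (Icc a b) f)
    (hfi : IntervalIntegrable f volume a b) (hab : a < b) :
    ⨍ t in a..b, f t ≤ f ((a + b) / 2) := by
  have h := integral_mono_on hab.le (hfi.add hfi.comp_add_sub) intervalIntegrable_const
    fun t ht ↦ hf.add_comp_add_sub_le_two_mul ht
  rw [intervalIntegral.integral_const, integral_add_comp_add_sub hfi, smul_eq_mul] at h
  rw [interval_average_eq, smul_eq_mul, inv_mul_le_iff₀ (sub_pos.2 hab)]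
  linarith

end HermiteHadamard

lemma log_identric {a b : ℝ} (ha : 0 < a) (hb : 0 < b) (hab : a ≠ b) :
    log (identric a b) = ⨍ t in a..b, log t := by
  have hba : b - a ≠ 0 := sub_ne_zero.2 hab.symm
  have hpow : 0 < b ^ b / a ^ a := by positivity
  rw [identric, if_neg hab, log_mul (by positivity) (rpow_pos_of_pos hpow _).ne', log_inv,
    log_exp, log_rpow hpow, log_div (by positivity) (by positivity), log_rpow hb, log_rpow ha,
    interval_average_eq, integral_log, smul_eq_mul]
  field_simp
  ring

lemma identric_pos {a b : ℝ} (ha : 0 < a) (hb : 0 < b) : 0 < identric a b := by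
  unfold identric
  split_ifs
  · exact ha
  · positivity

lemma log_identric_bounds {a b : ℝ} (ha : 0 < a) (hb : 0 < b) :
    (log a + log b) / 2 ≤ log (identric a b) ∧ log (identric a b) ≤ log ((a + b) / 2) := by
  rcases eq_or_ne a b with rfl | hab
  · simp [identric]
  rw [log_identric ha hb hab]
  wlog hlt : a < b generalizing a b
  · rw [interval_average_symm, add_comm (log a), add_comm a]
    exact this hb ha hab.symm (hab.lt_or_gt.resolve_left hlt)
  have hlog : ConcaveOn ℝ (Icc a b) log :=
    strictConcaveOn_log_Ioi.concaveOn.subset (fun t ht ↦ ha.trans_le ht.1) (convex_Icc a b)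
  exact ⟨hlog.add_div_two_le_interval_average intervalIntegrable_log' hlt,
    hlog.interval_average_le_midpoint intervalIntegrable_log' hlt⟩

lemma identric_le_add_div_two {a b : ℝ} (ha : 0 < a) (hb : 0 < b) :
    identric a b ≤ (a + b) / 2 :=
  (log_le_log_iff (identric_pos ha hb) (by positivity)).1 (log_identric_bounds ha hb).2

lemma log_prod_rpow {ι : Type*} {s : Finset ι} {x w : ι → ℝ} (hx : ∀ i ∈ s, 0 < x i) :
    log (∏ i ∈ s, x i ^ w i) = ∑ i ∈ s, w i * log (x i) := by
  rw [log_prod fun i hi ↦ (rpow_pos_of_pos (hx i hi) _).ne']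
  exact sum_congr rfl fun i hi ↦ log_rpow (hx i hi) _

structure IsWeightFunction {ι κ : Type*} [Fintype ι] [Fintype κ]
    (μ : ι → ℝ) (lam : κ → ℝ) (ω : ι → κ → ℝ) : Prop where
  nonneg : ∀ i j, 0 ≤ ω i j
  weighted_col_sum : ∀ j, ∑ i, ω i j * μ i = 1
  weighted_row_sum : ∀ i, ∑ j, ω i j * lam j = 1

namespace IsWeightFunction

variable {ι κ : Type*} [Fintype ι] [Fintype κ] {μ : ι → ℝ} {lam : κ → ℝ}
  {ω ω₁ ω₂ : ι → κ → ℝ} {x : κ → ℝ}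

lemma sum_mul_sum (hω : IsWeightFunction μ lam ω) (c : κ → ℝ) :
    ∑ i, μ i * ∑ j, ω i j * lam j * c j = ∑ j, lam j * c j := by
  simp_rw [mul_sum, sum_comm (γ := ι)]
  refine sum_congr rfl fun j _ ↦ ?_
  rw [← mul_one (lam j * c j), ← hω.weighted_col_sum j, mul_sum]
  exact sum_congr rfl fun i _ ↦ by ring

lemma row_sum_pos (hω : IsWeightFunction μ lam ω) (hlam : ∀ j, 0 ≤ lam j) (hx : ∀ j, 0 < x j)
    (i : ι) : 0 < ∑ j, ω i j * lam j * x j := by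
  obtain ⟨j₀, -, hj₀⟩ := exists_ne_zero_of_sum_ne_zero
    ((hω.weighted_row_sum i).trans_ne one_ne_zero)
  have hw : ∀ j, 0 ≤ ω i j * lam j := fun j ↦ mul_nonneg (hω.nonneg i j) (hlam j)
  exact sum_pos' (fun j _ ↦ mul_nonneg (hw j) (hx j).le)
    ⟨j₀, mem_univ j₀, mul_pos ((hw j₀).lt_of_ne' hj₀) (hx j₀)⟩

lemma sum_mul_log_le (hω : IsWeightFunction μ lam ω) (hμ : ∀ i, 0 ≤ μ i)
    (hlam : ∀ j, 0 ≤ lam j) (hx : ∀ j, 0 < x j) :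
    ∑ j, lam j * log (x j) ≤ ∑ i, μ i * log (∑ j, ω i j * lam j * x j) := by
  rw [← hω.sum_mul_sum]
  refine sum_le_sum fun i _ ↦ mul_le_mul_of_nonneg_left ?_ (hμ i)
  simpa only [smul_eq_mul] using strictConcaveOn_log_Ioi.concaveOn.le_map_sum
    (fun j _ ↦ mul_nonneg (hω.nonneg i j) (hlam j)) (hω.weighted_row_sum i) (fun j _ ↦ hx j)

theorem prod_rpow_le_prod_identric_rpow (hω₁ : IsWeightFunction μ lam ω₁)
    (hω₂ : IsWeightFunction μ lam ω₂) (hμ : ∀ i, 0 ≤ μ i) (hlam : ∀ j, 0 ≤ lam j)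
    (hx : ∀ j, 0 < x j) :
    ∏ j, x j ^ lam j ≤
      ∏ i, identric (∑ j, ω₁ i j * lam j * x j) (∑ j, ω₂ i j * lam j * x j) ^ μ i := by
  set S₁ := fun i ↦ ∑ j, ω₁ i j * lam j * x j
  set S₂ := fun i ↦ ∑ j, ω₂ i j * lam j * x j
  have hS₁ : ∀ i, 0 < S₁ i := hω₁.row_sum_pos hlam hx
  have hS₂ : ∀ i, 0 < S₂ i := hω₂.row_sum_pos hlam hx
  have hI : ∀ i, 0 < identric (S₁ i) (S₂ i) := fun i ↦ identric_pos (hS₁ i) (hS₂ i)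
  rw [← log_le_log_iff (prod_pos fun j _ ↦ rpow_pos_of_pos (hx j) _)
    (prod_pos fun i _ ↦ rpow_pos_of_pos (hI i) _), log_prod_rpow fun j _ ↦ hx j,
    log_prod_rpow fun i _ ↦ hI i]
  calc ∑ j, lam j * log (x j)
      = (∑ j, lam j * log (x j) + ∑ j, lam j * log (x j)) / 2 := by ring
    _ ≤ (∑ i, μ i * log (S₁ i) + ∑ i, μ i * log (S₂ i)) / 2 := by
        gcongr
        exacts [hω₁.sum_mul_log_le hμ hlam hx, hω₂.sum_mul_log_le hμ hlam hx]
    _ = ∑ i, μ i * ((log (S₁ i) + log (S₂ i)) / 2) := by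
        rw [← sum_add_distrib, sum_div]
        exact sum_congr rfl fun i _ ↦ by ring
    _ ≤ ∑ i, μ i * log (identric (S₁ i) (S₂ i)) :=
        sum_le_sum fun i _ ↦
          mul_le_mul_of_nonneg_left (log_identric_bounds (hS₁ i) (hS₂ i)).1 (hμ i)

theorem prod_identric_rpow_le_sum (hω₁ : IsWeightFunction μ lam ω₁)
    (hω₂ : IsWeightFunction μ lam ω₂) (hμ : ∀ i, 0 ≤ μ i) (hμ1 : ∑ i, μ i = 1)
    (hlam : ∀ j, 0 ≤ lam j) (hx : ∀ j, 0 < x j) :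
    ∏ i, identric (∑ j, ω₁ i j * lam j * x j) (∑ j, ω₂ i j * lam j * x j) ^ μ i ≤
      ∑ j, lam j * x j := by
  set S₁ := fun i ↦ ∑ j, ω₁ i j * lam j * x j
  set S₂ := fun i ↦ ∑ j, ω₂ i j * lam j * x j
  have hS₁ : ∀ i, 0 < S₁ i := hω₁.row_sum_pos hlam hx
  have hS₂ : ∀ i, 0 < S₂ i := hω₂.row_sum_pos hlam hx
  calc ∏ i, identric (S₁ i) (S₂ i) ^ μ i
      ≤ ∏ i, ((S₁ i + S₂ i) / 2) ^ μ i :=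
        prod_le_prod (fun i _ ↦ (rpow_pos_of_pos (identric_pos (hS₁ i) (hS₂ i)) _).le)
          fun i _ ↦ rpow_le_rpow (identric_pos (hS₁ i) (hS₂ i)).le
            (identric_le_add_div_two (hS₁ i) (hS₂ i)) (hμ i)
    _ ≤ ∑ i, μ i * ((S₁ i + S₂ i) / 2) :=
        geom_mean_le_arith_mean_weighted _ _ _ (fun i _ ↦ hμ i) hμ1
          fun i _ ↦ by linarith [hS₁ i, hS₂ i]
    _ = (∑ i, μ i * S₁ i + ∑ i, μ i * S₂ i) / 2 := by
        rw [← sum_add_distrib, sum_div]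
        exact sum_congr rfl fun i _ ↦ by ring
    _ = ∑ j, lam j * x j := by
        rw [hω₁.sum_mul_sum, hω₂.sum_mul_sum]
        ring

end IsWeightFunction

theorem weighted_agm_refinement_identric_general
    {m n : ℕ} (μ : Fin m → ℝ) (lam : Fin n → ℝ)
    (hμ0 : ∀ i, 0 ≤ μ i) (hμ1 : ∑ i, μ i = 1)
    (hlam0 : ∀ j, 0 ≤ lam j)
    (ω₁ ω₂ : Fin m → Fin n → ℝ)
    (hω₁0 : ∀ i j, 0 ≤ ω₁ i j) (hω₁μ : ∀ j, ∑ i, ω₁ i j * μ i = 1)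
    (hω₁lam : ∀ i, ∑ j, ω₁ i j * lam j = 1)
    (hω₂0 : ∀ i j, 0 ≤ ω₂ i j) (hω₂μ : ∀ j, ∑ i, ω₂ i j * μ i = 1)
    (hω₂lam : ∀ i, ∑ j, ω₂ i j * lam j = 1)
    (x : Fin n → ℝ) (hx : ∀ j, 0 < x j) :
    (∏ j, x j ^ lam j) ≤
        ∏ i, (identric (∑ j, ω₁ i j * lam j * x j) (∑ j, ω₂ i j * lam j * x j)) ^ μ i ∧
      (∏ i, (identric (∑ j, ω₁ i j * lam j * x j) (∑ j, ω₂ i j * lam j * x j)) ^ μ i) ≤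
        ∑ j, lam j * x j := by
  have hω₁ : IsWeightFunction μ lam ω₁ := ⟨hω₁0, hω₁μ, hω₁lam⟩
  have hω₂ : IsWeightFunction μ lam ω₂ := ⟨hω₂0, hω₂μ, hω₂lam⟩
  exact ⟨hω₁.prod_rpow_le_prod_identric_rpow hω₂ hμ0 hlam0 hx,
    hω₁.prod_identric_rpow_le_sum hω₂ hμ0 hμ1 hlam0 hx⟩

/-- Refinement of the weighted AM–GM inequality via two weight functions and the
identric mean. -/
theorem weighted_agm_refinement_identric
    {m n : ℕ} (μ : Fin m → ℝ) (lam : Fin n → ℝ)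
    (hμ0 : ∀ i, 0 ≤ μ i) (hμ1 : ∑ i, μ i = 1)
    (hlam0 : ∀ j, 0 ≤ lam j) (hlam1 : ∑ j, lam j = 1)
    (ω₁ ω₂ : Fin m → Fin n → ℝ)
    (hω₁0 : ∀ i j, 0 ≤ ω₁ i j) (hω₁μ : ∀ j, ∑ i, ω₁ i j * μ i = 1)
    (hω₁lam : ∀ i, ∑ j, ω₁ i j * lam j = 1)
    (hω₂0 : ∀ i j, 0 ≤ ω₂ i j) (hω₂μ : ∀ j, ∑ i, ω₂ i j * μ i = 1)
    (hω₂lam : ∀ i, ∑ j, ω₂ i j * lam j = 1)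
    (x : Fin n → ℝ) (hx : ∀ j, 0 < x j) :
    (∏ j, x j ^ lam j) ≤
        ∏ i, (identric (∑ j, ω₁ i j * lam j * x j) (∑ j, ω₂ i j * lam j * x j)) ^ μ i ∧
      (∏ i, (identric (∑ j, ω₁ i j * lam j * x j) (∑ j, ω₂ i j * lam j * x j)) ^ μ i) ≤
        ∑ j, lam j * x j :=
  weighted_agm_refinement_identric_general μ lam hμ0 hμ1 hlam0 ω₁ ω₂ hω₁0 hω₁μ hω₁lam hω₂0 hω₂μ
    hω₂lam x hx
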